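/- Error propagation in the two-sided interpolative decomposition: if Λ_y bounds the ℓ¹-norms of the rows of H_y, then ‖F − H_x F(I,J) H_yᵀ‖_max ≤ ‖F − F(:,J)H_yᵀ‖_max + Λ_y ‖F − H_x F(I,:)‖_max. -/
import Mathlib


/-- Error propagation in the two-sided interpolative decomposition:
`‖F − H_x F(I,J) H_yᵀ‖_max ≤ ‖F − F(:,J)H_yᵀ‖_max + Λ_y ‖F − H_x F(I,:)‖_max`,
where `Λ_y` bounds the ℓ¹ norms of the rows of `H_y`. -/
theorem two_sided_id_error_propagation
    {𝕜 : Type*} [RCLike 𝕜] {Nx Ny mx my : ℕ}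
    (F : Matrix (Fin Nx) (Fin Ny) 𝕜)
    (Hx : Matrix (Fin Nx) (Fin mx) 𝕜)
    (Hy : Matrix (Fin Ny) (Fin my) 𝕜)
    (I : Fin mx → Fin Nx) (J : Fin my → Fin Ny)
    (εx εy Λy : ℝ) (hΛy : 0 ≤ Λy)
    (hrowY : ∀ i, (∑ ν, ‖Hy i ν‖) ≤ Λy)
    (hX : ∀ i j, ‖(F - Hx * (F.submatrix I id)) i j‖ ≤ εx)
    (hY : ∀ i j, ‖(F - (F.submatrix id J) * Hy.transpose) i j‖ ≤ εy) :
    ∀ i j, ‖(F - Hx * (F.submatrix I J) * Hy.transpose) i j‖ ≤ εy + Λy * εx := by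
  intro i j
  have hεx : 0 ≤ εx := le_trans (norm_nonneg _) (hX i j)
  have key : (F - Hx * (F.submatrix I J) * Hy.transpose) i j
      = (F - (F.submatrix id J) * Hy.transpose) i j
        + ∑ ν, ((F - Hx * (F.submatrix I id)) i (J ν)) * Hy j ν := by
    simp only [Matrix.sub_apply, Matrix.mul_apply, Matrix.transpose_apply,
      Matrix.submatrix_apply, id_eq, sub_mul, Finset.sum_sub_distrib]
    ring
  rw [key]
  calc ‖(F - (F.submatrix id J) * Hy.transpose) i j
        + ∑ ν, ((F - Hx * (F.submatrix I id)) i (J ν)) * Hy j ν‖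
      ≤ ‖(F - (F.submatrix id J) * Hy.transpose) i j‖
        + ‖∑ ν, ((F - Hx * (F.submatrix I id)) i (J ν)) * Hy j ν‖ := norm_add_le _ _
    _ ≤ εy + Λy * εx := by
        gcongr
        · exact hY i j
        · calc ‖∑ ν, ((F - Hx * (F.submatrix I id)) i (J ν)) * Hy j ν‖
              ≤ ∑ ν, ‖((F - Hx * (F.submatrix I id)) i (J ν)) * Hy j ν‖ :=
                norm_sum_le _ _
            _ ≤ ∑ ν, εx * ‖Hy j ν‖ := by
                refine Finset.sum_le_sum fun ν _ => ?_
                rw [norm_mul]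
                exact mul_le_mul_of_nonneg_right (hX i (J ν)) (norm_nonneg _)
            _ = (∑ ν, ‖Hy j ν‖) * εx := by rw [← Finset.mul_sum, mul_comm]
            _ ≤ Λy * εx := mul_le_mul_of_nonneg_right (hrowY j) hεx
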